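/- arXiv:1008.0262 — 7 statements merged into one kernel-verified Lean document; each statement's English description precedes it below -/
import Mathlib

section
/- Let V, W, X be real normed vector spaces, and let j : V → W and i : W → X be continuous linear maps (playing the role of the continuous embeddings V ↪ W ↪ X). Let ε ∈ [0,1) and M > 0 be such that the interpolation inequality ‖j f‖_W ≤ M · ‖f‖_V^ε · ‖i(j f)‖_X^{1−ε} holds for all f ∈ V. Let E₀, E₁ : V → ℝ and let α > 0 and ω, k, β ≥ 0 be constants such that E₀(f) + ω‖i(j f)‖_X^2 ≥ α‖f‖_V^2 and E₁(f) ≥ −k‖j f‖_W^2 − β for all f ∈ V. Then there exist α' > 0 and ω' ≥ 0 such that E₀(f) + E₁(f) ≥ α'‖f‖_V^2 − ω'‖i(j f)‖_X^2 − β for all f ∈ V. -/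
/-!
Squaring the interpolation inequality and applying the weighted AM-GM inequality with a small
weight `δ` on `‖f‖ ^ 2` gives `‖j f‖ ^ 2 ≤ M ^ 2 * (δ * ‖f‖ ^ 2 + C_δ * ‖i (j f)‖ ^ 2)`. With
`δ = α / (2 * (k * M ^ 2 + 1))` the perturbation `E₁` then costs at most half of the coercivity
constant `α`, and the rest is absorbed into the lower-order term.
-/

open Real

/-- Young's inequality with a small parameter `δ`. -/
theorem Real.rpow_mul_rpow_le_mul_add_mul {ε a b δ : ℝ} (hε₀ : 0 ≤ ε) (hε₁ : ε < 1)
    (ha : 0 ≤ a) (hb : 0 ≤ b) (hδ : 0 < δ) :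
    a ^ ε * b ^ (1 - ε) ≤ δ * a + δ ^ (-ε / (1 - ε)) * b := by
  have h1ε : 0 < 1 - ε := by linarith
  have hδ' : 0 ≤ δ ^ (-ε / (1 - ε)) := rpow_nonneg hδ.le _
  -- the factors `δ ^ ε` and `δ ^ (-ε)` produced by the two weights cancel
  have hprod : (δ * a) ^ ε * (δ ^ (-ε / (1 - ε)) * b) ^ (1 - ε) = a ^ ε * b ^ (1 - ε) := by
    rw [mul_rpow hδ.le ha, mul_rpow hδ' hb, ← rpow_mul hδ.le, div_mul_cancel₀ _ h1ε.ne',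
      mul_mul_mul_comm, ← rpow_add hδ, add_neg_cancel, rpow_zero, one_mul]
  calc a ^ ε * b ^ (1 - ε)
      ≤ ε * (δ * a) + (1 - ε) * (δ ^ (-ε / (1 - ε)) * b) := by
        rw [← hprod]
        exact geom_mean_le_arith_mean2_weighted hε₀ h1ε.le (by positivity) (by positivity)
          (by ring)
    _ ≤ δ * a + δ ^ (-ε / (1 - ε)) * b :=
        add_le_add (mul_le_of_le_one_left (by positivity) hε₁.le)
          (mul_le_of_le_one_left (by positivity) (by linarith))

theorem Real.sq_le_of_le_mul_rpow_mul_rpow {x y z M ε : ℝ} (hx : 0 ≤ x) (hy : 0 ≤ y)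
    (hz : 0 ≤ z) (h : x ≤ M * y ^ ε * z ^ (1 - ε)) :
    x ^ 2 ≤ M ^ 2 * (y ^ 2) ^ ε * (z ^ 2) ^ (1 - ε) := by
  rw [← rpow_pow_comm hy, ← rpow_pow_comm hz, ← mul_pow, ← mul_pow]
  exact pow_le_pow_left₀ hx h 2

theorem sq_norm_le_of_interpolation {V W X : Type*} [SeminormedAddCommGroup V]
    [SeminormedAddCommGroup W] [SeminormedAddCommGroup X] (j : V → W) (i : W → X) {ε M δ : ℝ}
    (hε₀ : 0 ≤ ε) (hε₁ : ε < 1) (hδ : 0 < δ)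
    (hinterp : ∀ f : V, ‖j f‖ ≤ M * ‖f‖ ^ ε * ‖i (j f)‖ ^ (1 - ε)) (f : V) :
    ‖j f‖ ^ 2 ≤ M ^ 2 * (δ * ‖f‖ ^ 2 + δ ^ (-ε / (1 - ε)) * ‖i (j f)‖ ^ 2) :=
  calc ‖j f‖ ^ 2 ≤ M ^ 2 * (‖f‖ ^ 2) ^ ε * (‖i (j f)‖ ^ 2) ^ (1 - ε) :=
        sq_le_of_le_mul_rpow_mul_rpow (norm_nonneg _) (norm_nonneg _) (norm_nonneg _) (hinterp f)
    _ = M ^ 2 * ((‖f‖ ^ 2) ^ ε * (‖i (j f)‖ ^ 2) ^ (1 - ε)) := mul_assoc _ _ _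
    _ ≤ M ^ 2 * (δ * ‖f‖ ^ 2 + δ ^ (-ε / (1 - ε)) * ‖i (j f)‖ ^ 2) := by
        gcongr
        exact rpow_mul_rpow_le_mul_add_mul hε₀ hε₁ (sq_nonneg _) (sq_nonneg _) hδ

theorem elliptic_perturbation_lower_bound_general
    {V W X : Type*} [NormedAddCommGroup V] [NormedSpace ℝ V]
    [NormedAddCommGroup W] [NormedSpace ℝ W]
    [NormedAddCommGroup X] [NormedSpace ℝ X]
    (j : V →L[ℝ] W) (i : W →L[ℝ] X)
    (ε M : ℝ) (hε : ε ∈ Set.Ico (0 : ℝ) 1)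
    (hinterp : ∀ f : V, ‖j f‖ ≤ M * ‖f‖ ^ ε * ‖i (j f)‖ ^ (1 - ε))
    (E₀ E₁ : V → ℝ) (α ω k β : ℝ)
    (hα : 0 < α) (hω : 0 ≤ ω) (hk : 0 ≤ k)
    (hE₀ : ∀ f : V, α * ‖f‖ ^ 2 ≤ E₀ f + ω * ‖i (j f)‖ ^ 2)
    (hE₁ : ∀ f : V, -k * ‖j f‖ ^ 2 - β ≤ E₁ f) :
    ∃ α' > (0 : ℝ), ∃ ω' ≥ (0 : ℝ),
      ∀ f : V, α' * ‖f‖ ^ 2 - ω' * ‖i (j f)‖ ^ 2 - β ≤ E₀ f + E₁ f := by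
  set δ := α / (2 * (k * M ^ 2 + 1))
  have hδ : 0 < δ := by positivity
  have hkδ : k * M ^ 2 * δ ≤ α / 2 := by
    have : δ * (k * M ^ 2 + 1) = α / 2 := by
      simp only [δ]
      field_simp
    nlinarith
  refine ⟨α / 2, by positivity, ω + k * M ^ 2 * δ ^ (-ε / (1 - ε)), by positivity, fun f => ?_⟩
  have hjf := mul_le_mul_of_nonneg_left
    (sq_norm_le_of_interpolation j i hε.1 hε.2 hδ hinterp f) hk
  nlinarith [hE₀ f, hE₁ f, mul_le_mul_of_nonneg_right hkδ (sq_nonneg ‖f‖)]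

/-- Quantitative ellipticity of a perturbed functional: if
`E₀ f + ω * ‖i (j f)‖ ^ 2 ≥ α * ‖f‖ ^ 2` and `E₁ f ≥ -k * ‖j f‖ ^ 2 - β`, with the
interpolation inequality `‖j f‖ ≤ M * ‖f‖ ^ ε * ‖i (j f)‖ ^ (1 - ε)` for some
`ε ∈ [0, 1)`, then `E₀ + E₁` has a lower bound
`E₀ f + E₁ f ≥ α' * ‖f‖ ^ 2 - ω' * ‖i (j f)‖ ^ 2 - β` with `α' > 0` and `ω' ≥ 0`. -/
theorem elliptic_perturbation_lower_bound
    {V W X : Type*} [NormedAddCommGroup V] [NormedSpace ℝ V]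
    [NormedAddCommGroup W] [NormedSpace ℝ W]
    [NormedAddCommGroup X] [NormedSpace ℝ X]
    (j : V →L[ℝ] W) (i : W →L[ℝ] X)
    (ε M : ℝ) (hε : ε ∈ Set.Ico (0 : ℝ) 1) (hM : 0 < M)
    (hinterp : ∀ f : V, ‖j f‖ ≤ M * ‖f‖ ^ ε * ‖i (j f)‖ ^ (1 - ε))
    (E₀ E₁ : V → ℝ) (α ω k β : ℝ)
    (hα : 0 < α) (hω : 0 ≤ ω) (hk : 0 ≤ k) (hβ : 0 ≤ β)
    (hE₀ : ∀ f : V, α * ‖f‖ ^ 2 ≤ E₀ f + ω * ‖i (j f)‖ ^ 2)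
    (hE₁ : ∀ f : V, -k * ‖j f‖ ^ 2 - β ≤ E₁ f) :
    ∃ α' > (0 : ℝ), ∃ ω' ≥ (0 : ℝ),
      ∀ f : V, α' * ‖f‖ ^ 2 - ω' * ‖i (j f)‖ ^ 2 - β ≤ E₀ f + E₁ f :=
  elliptic_perturbation_lower_bound_general j i ε M hε hinterp E₀ E₁ α ω k β hα hω hk hE₀ hE₁
end

section
/- Let V, W, X be real normed vector spaces, and let j : V → W and i : W → X be continuous linear maps. Let ε ∈ [0,1) and M > 0 be such that ‖j f‖_W ≤ M · ‖f‖_V^ε · ‖i(j f)‖_X^{1−ε} for all f ∈ V. Let E₀, E₁ : V → ℝ and let α > 0 and ω, k, β ≥ 0 be constants such that E₀(f) + ω‖i(j f)‖_X^2 ≥ α‖f‖_V^2 and E₁(f) ≥ −k‖j f‖_W^2 − β for all f ∈ V. Assume moreover that the function f ↦ E₀(f) + ω‖i(j f)‖_X^2 is convex on V and that E₁ is convex on V. Then there exists ω' ≥ 0 such that the function f ↦ E₀(f) + E₁(f) + ω'‖i(j f)‖_X^2 is convex on V and coercive, i.e. every sublevel set {f ∈ V : E₀(f) + E₁(f) +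 ω'‖i(j f)‖_X^2 ≤ c}, c ∈ ℝ, is bounded in V. (In other words, if E₀ is X-elliptic in the quantitative sense above and E₁ is convex with the stated lower growth bound, then E₀ + E₁ is X-elliptic.) -/
/-! The interpolation inequality and Young's inequality with a small parameter give
`k ‖j f‖² ≤ (α / 2) ‖f‖² + K ‖i (j f)‖²` for some `K ≥ 0`. Taking `ω' = ω + K`, convexity is
preserved since `f ↦ ‖i (j f)‖²` is convex, and the lower growth bounds on `E₀` and `E₁` leave
`E₀ f + E₁ f + ω' ‖i (j f)‖² ≥ (α / 2) ‖f‖² - β`, whose sublevel sets are bounded. -/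

open Set

theorem Real.exists_mul_rpow_mul_rpow_le_add {ε c δ : ℝ} (hε : ε ∈ Ico 0 1) (hc : 0 ≤ c)
    (hδ : 0 < δ) :
    ∃ K ≥ 0, ∀ x y : ℝ, 0 ≤ x → 0 ≤ y → c * (x ^ ε * y ^ (1 - ε)) ≤ δ * x + K * y := by
  obtain ⟨hε₀, hε₁⟩ := hε
  have h1ε : 0 < 1 - ε := by linarith
  -- Weighted AM-GM for `δ * x` and `D * y`, with `D` chosen so that `δ ^ ε * D ^ (1 - ε) = c`.
  set D := (c / δ ^ ε) ^ (1 - ε)⁻¹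
  have hD : δ ^ ε * D ^ (1 - ε) = c := by
    rw [← Real.rpow_mul (by positivity), inv_mul_cancel₀ h1ε.ne', Real.rpow_one,
      mul_div_cancel₀ _ (by positivity)]
  refine ⟨(1 - ε) * D, by positivity, fun x y hx hy => ?_⟩
  calc c * (x ^ ε * y ^ (1 - ε)) = (δ * x) ^ ε * (D * y) ^ (1 - ε) := by
        rw [Real.mul_rpow hδ.le hx, Real.mul_rpow (by positivity) hy, ← hD]; ring
    _ ≤ ε * (δ * x) + (1 - ε) * (D * y) :=
        Real.geom_mean_le_arith_mean2_weighted hε₀ h1ε.le (by positivity) (by positivity)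
          (by ring)
    _ ≤ δ * x + (1 - ε) * D * y := by nlinarith [mul_nonneg hδ.le hx]

theorem exists_mul_sq_norm_le_of_interpolation {V W X : Type*} [SeminormedAddCommGroup V]
    [SeminormedAddCommGroup W] [SeminormedAddCommGroup X]
    (j : V → W) (i : W → X) {ε M k δ : ℝ} (hε : ε ∈ Ico 0 1) (hk : 0 ≤ k) (hδ : 0 < δ)
    (hinterp : ∀ f, ‖j f‖ ≤ M * ‖f‖ ^ ε * ‖i (j f)‖ ^ (1 - ε)) :
    ∃ K ≥ 0, ∀ f, k * ‖j f‖ ^ 2 ≤ δ * ‖f‖ ^ 2 + K * ‖i (j f)‖ ^ 2 := by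
  obtain ⟨K, hK₀, hK⟩ :=
    Real.exists_mul_rpow_mul_rpow_le_add hε (by positivity : 0 ≤ k * M ^ 2) hδ
  refine ⟨K, hK₀, fun f => ?_⟩
  calc k * ‖j f‖ ^ 2 ≤ k * (M * ‖f‖ ^ ε * ‖i (j f)‖ ^ (1 - ε)) ^ 2 := by
        gcongr
        exact hinterp f
    _ = k * M ^ 2 * ((‖f‖ ^ 2) ^ ε * (‖i (j f)‖ ^ 2) ^ (1 - ε)) := by
        rw [← Real.rpow_pow_comm (norm_nonneg f), ← Real.rpow_pow_comm (norm_nonneg (i (j f)))]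
        ring
    _ ≤ δ * ‖f‖ ^ 2 + K * ‖i (j f)‖ ^ 2 := hK _ _ (by positivity) (by positivity)

theorem isBounded_setOf_le_of_mul_sq_norm_sub_le {V : Type*} [SeminormedAddCommGroup V]
    {F : V → ℝ} {a b : ℝ} (ha : 0 < a) (hF : ∀ f, a * ‖f‖ ^ 2 - b ≤ F f) (c : ℝ) :
    Bornology.IsBounded {f | F f ≤ c} := by
  rw [Metric.isBounded_iff_subset_closedBall 0]
  refine ⟨√((c + b) / a), fun f hf => ?_⟩
  rw [mem_closedBall_zero_iff]
  apply Real.le_sqrt_of_sq_le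
  rw [le_div_iff₀ ha]
  linarith [hF f, show F f ≤ c from hf]

theorem convexOn_univ_sq_norm_comp {V X : Type*} [AddCommGroup V] [Module ℝ V]
    [SeminormedAddCommGroup X] [NormedSpace ℝ X] (T : V →ₗ[ℝ] X) :
    ConvexOn ℝ univ (fun f => ‖T f‖ ^ 2) :=
  (convexOn_univ_norm.pow (fun _ _ => norm_nonneg _) 2).comp_linearMap T

theorem elliptic_perturbation_general
    {V W X : Type*} [NormedAddCommGroup V] [NormedSpace ℝ V]
    [NormedAddCommGroup W] [NormedSpace ℝ W]
    [NormedAddCommGroup X] [NormedSpace ℝ X]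
    (j : V →L[ℝ] W) (i : W →L[ℝ] X)
    (ε M : ℝ) (hε : ε ∈ Set.Ico (0 : ℝ) 1)
    (hinterp : ∀ f : V, ‖j f‖ ≤ M * ‖f‖ ^ ε * ‖i (j f)‖ ^ (1 - ε))
    (E₀ E₁ : V → ℝ) (α ω k β : ℝ)
    (hα : 0 < α) (hω : 0 ≤ ω) (hk : 0 ≤ k)
    (hE₀ : ∀ f : V, α * ‖f‖ ^ 2 ≤ E₀ f + ω * ‖i (j f)‖ ^ 2)
    (hE₀conv : ConvexOn ℝ Set.univ (fun f : V => E₀ f + ω * ‖i (j f)‖ ^ 2))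
    (hE₁ : ∀ f : V, -k * ‖j f‖ ^ 2 - β ≤ E₁ f)
    (hE₁conv : ConvexOn ℝ Set.univ E₁) :
    ∃ ω' ≥ (0 : ℝ),
      ConvexOn ℝ Set.univ (fun f : V => E₀ f + E₁ f + ω' * ‖i (j f)‖ ^ 2) ∧
      ∀ c : ℝ, Bornology.IsBounded
        {f : V | E₀ f + E₁ f + ω' * ‖i (j f)‖ ^ 2 ≤ c} := by
  obtain ⟨K, hK₀, hK⟩ := exists_mul_sq_norm_le_of_interpolation j i hε hk (half_pos hα) hinterp
  refine ⟨ω + K, by positivity, ?_,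
    isBounded_setOf_le_of_mul_sq_norm_sub_le (half_pos hα) (b := β) fun f => ?_⟩
  · have hK_sq : ConvexOn ℝ univ (fun f => K * ‖i (j f)‖ ^ 2) :=
      (convexOn_univ_sq_norm_comp (i.comp j).toLinearMap).smul hK₀
    refine (hE₀conv.add (hE₁conv.add hK_sq)).congr fun f _ => ?_
    simp only [Pi.add_apply]
    ring
  · linarith [hE₀ f, hE₁ f, hK f]

/-- If `E₀` is `X`-elliptic in the quantitative sense (`f ↦ E₀ f + ω * ‖i (j f)‖ ^ 2` is
convex and bounded below by `α * ‖f‖ ^ 2` with `α > 0`) and `E₁` is convex with the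
growth bound `E₁ f ≥ -k * ‖j f‖ ^ 2 - β`, where the intermediate space `W` satisfies the
interpolation inequality `‖j f‖ ≤ M * ‖f‖ ^ ε * ‖i (j f)‖ ^ (1 - ε)` for some
`ε ∈ [0, 1)`, then `E₀ + E₁` is `X`-elliptic: there is `ω' ≥ 0` such that
`f ↦ E₀ f + E₁ f + ω' * ‖i (j f)‖ ^ 2` is convex and coercive (bounded sublevel sets). -/
theorem elliptic_perturbation
    {V W X : Type*} [NormedAddCommGroup V] [NormedSpace ℝ V]
    [NormedAddCommGroup W] [NormedSpace ℝ W]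
    [NormedAddCommGroup X] [NormedSpace ℝ X]
    (j : V →L[ℝ] W) (i : W →L[ℝ] X)
    (ε M : ℝ) (hε : ε ∈ Set.Ico (0 : ℝ) 1) (hM : 0 < M)
    (hinterp : ∀ f : V, ‖j f‖ ≤ M * ‖f‖ ^ ε * ‖i (j f)‖ ^ (1 - ε))
    (E₀ E₁ : V → ℝ) (α ω k β : ℝ)
    (hα : 0 < α) (hω : 0 ≤ ω) (hk : 0 ≤ k) (hβ : 0 ≤ β)
    (hE₀ : ∀ f : V, α * ‖f‖ ^ 2 ≤ E₀ f + ω * ‖i (j f)‖ ^ 2)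
    (hE₀conv : ConvexOn ℝ Set.univ (fun f : V => E₀ f + ω * ‖i (j f)‖ ^ 2))
    (hE₁ : ∀ f : V, -k * ‖j f‖ ^ 2 - β ≤ E₁ f)
    (hE₁conv : ConvexOn ℝ Set.univ E₁) :
    ∃ ω' ≥ (0 : ℝ),
      ConvexOn ℝ Set.univ (fun f : V => E₀ f + E₁ f + ω' * ‖i (j f)‖ ^ 2) ∧
      ∀ c : ℝ, Bornology.IsBounded
        {f : V | E₀ f + E₁ f + ω' * ‖i (j f)‖ ^ 2 ≤ c} :=
  elliptic_perturbation_general j i ε M hε hinterp E₀ E₁ α ω k β hα hω hk hE₀ hE₀conv hE₁ hE₁conv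
end

section
/- Let H be a real Hilbert space and let f : ℝ → H be continuous on [0,1] and differentiable on [0,1] with derivative f' (derivative taken within [0,1] at the endpoints), and assume that t ↦ ‖f(t)‖_H^2 and t ↦ ‖f'(t)‖_H^2 are integrable on (0,1). Set ‖f‖₂ := (∫₀¹ ‖f(t)‖_H^2 dt)^{1/2} and ‖f'‖₂ := (∫₀¹ ‖f'(t)‖_H^2 dt)^{1/2}. Then for every x ∈ [0,1] one has ‖f(x)‖_H^2 ≤ ‖f‖₂^2 + 2‖f‖₂‖f'‖₂. -/
/-! With `g = ‖f‖²` and `g' = 2⟪f, f'⟫`, the fundamental theorem of calculus gives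
`g x ≤ g y + ∫₀¹ |g'|` for all `x, y ∈ [0,1]`; averaging over `y` yields
`g x ≤ ∫₀¹ g + ∫₀¹ |g'|`, and Cauchy–Schwarz bounds `∫₀¹ |g'| ≤ 2 ‖f‖₂ ‖f'‖₂`. -/

open MeasureTheory Set

section L2

variable {α : Type*} [MeasurableSpace α] {μ : Measure α}

theorem MeasureTheory.memLp_two_norm_of_integrable_sq_norm {E : Type*} [NormedAddCommGroup E]
    {u : α → E} (h : Integrable (fun a => ‖u a‖ ^ 2) μ) : MemLp (fun a => ‖u a‖) 2 μ := by
  have hmeas : AEStronglyMeasurable (fun a => ‖u a‖) μ := by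
    simpa [Real.sqrt_sq (norm_nonneg _)] using h.1.aemeasurable.sqrt.aestronglyMeasurable
  exact (memLp_two_iff_integrable_sq hmeas).2 h

theorem MeasureTheory.integral_mul_le_sqrt_mul_sqrt {φ ψ : α → ℝ} (hφ : MemLp φ 2 μ)
    (hψ : MemLp ψ 2 μ) :
    ∫ a, φ a * ψ a ∂μ ≤ √(∫ a, φ a ^ 2 ∂μ) * √(∫ a, ψ a ^ 2 ∂μ) := by
  have hHolder := integral_mul_norm_le_Lp_mul_Lq Real.HolderConjugate.two_two
    (by simpa using hφ) (by simpa using hψ)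
  simp only [Real.norm_eq_abs, Real.rpow_two, sq_abs] at hHolder
  calc ∫ a, φ a * ψ a ∂μ ≤ ∫ a, |φ a| * |ψ a| ∂μ :=
        integral_mono (hφ.integrable_mul hψ) (hφ.abs.integrable_mul hψ.abs)
          fun a => (le_abs_self _).trans (abs_mul _ _).le
    _ ≤ _ := by simpa [Real.sqrt_eq_rpow] using hHolder

end L2

section DerivBound

variable {g g' : ℝ → ℝ} {a b : ℝ}

theorem abs_sub_le_integral_abs_deriv
    (hderiv : ∀ t ∈ Icc a b, HasDerivWithinAt g (g' t) (Icc a b) t)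
    (hint : IntegrableOn g' (Ioo a b)) {x y : ℝ} (hx : x ∈ Icc a b) (hy : y ∈ Icc a b) :
    |g y - g x| ≤ ∫ t in Ioo a b, |g' t| := by
  wlog hxy : x ≤ y generalizing x y
  · rw [abs_sub_comm]; exact this hy hx (le_of_not_ge hxy)
  have hsub : Icc x y ⊆ Icc a b := Icc_subset_Icc hx.1 hy.2
  have hint' : IntegrableOn g' (Icc a b) := (integrableOn_Icc_iff_integrableOn_Ioo).2 hint
  have hftc : ∫ t in x..y, g' t = g y - g x :=
    intervalIntegral.integral_eq_sub_of_hasDerivAt_of_le hxy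
      (fun t ht => (hderiv t (hsub ht)).continuousWithinAt.mono hsub)
      (fun t ht => (hderiv t (hsub (Ioo_subset_Icc_self ht))).hasDerivAt
        (Icc_mem_nhds (hx.1.trans_lt ht.1) (ht.2.trans_le hy.2)))
      ((intervalIntegrable_iff_integrableOn_Icc_of_le hxy).2 (hint'.mono_set hsub))
  calc |g y - g x| = |∫ t in x..y, g' t| := by rw [hftc]
    _ ≤ ∫ t in Ioc x y, |g' t| := by
      rw [← intervalIntegral.integral_of_le hxy]
      exact intervalIntegral.abs_integral_le_integral_abs hxy
    _ ≤ ∫ t in Icc a b, |g' t| :=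
      setIntegral_mono_set hint'.abs (ae_of_all _ fun t => abs_nonneg _)
        (ae_of_all _ (Ioc_subset_Icc_self.trans hsub))
    _ = ∫ t in Ioo a b, |g' t| := integral_Icc_eq_integral_Ioo

theorem mul_le_integral_add_mul_integral_abs_deriv (hab : a ≤ b)
    (hderiv : ∀ t ∈ Icc a b, HasDerivWithinAt g (g' t) (Icc a b) t)
    (hint : IntegrableOn g' (Ioo a b)) {x : ℝ} (hx : x ∈ Icc a b) :
    (b - a) * g x ≤ (∫ t in Ioo a b, g t) + (b - a) * ∫ t in Ioo a b, |g' t| := by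
  set D := ∫ t in Ioo a b, |g' t|
  have hg : IntegrableOn g (Ioo a b) :=
    (ContinuousOn.integrableOn_Icc fun t ht => (hderiv t ht).continuousWithinAt).mono_set
      Ioo_subset_Icc_self
  have hle : ∀ y ∈ Ioo a b, g x ≤ g y + D := fun y hy => by
    linarith [neg_abs_le (g y - g x),
      abs_sub_le_integral_abs_deriv hderiv hint hx (Ioo_subset_Icc_self hy)]
  have hvol : volume (Ioo a b) ≠ ⊤ := by simp
  calc (b - a) * g x = ∫ _ in Ioo a b, g x := by
        rw [setIntegral_const, Real.volume_real_Ioo_of_le hab, smul_eq_mul]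
    _ ≤ ∫ y in Ioo a b, (g y + D) :=
      setIntegral_mono_on (integrableOn_const hvol) (hg.add (integrableOn_const hvol))
        measurableSet_Ioo hle
    _ = (∫ t in Ioo a b, g t) + (b - a) * D := by
      rw [integral_add hg (integrableOn_const hvol), setIntegral_const,
        Real.volume_real_Ioo_of_le hab, smul_eq_mul]

end DerivBound

theorem aestronglyMeasurable_restrict_of_hasDerivAt {E : Type*} [NormedAddCommGroup E]
    [NormedSpace ℝ E] [CompleteSpace E] {f f' : ℝ → E} {s : Set ℝ} (hs : MeasurableSet s)
    (hderiv : ∀ t ∈ s, HasDerivAt f (f' t) t) :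
    AEStronglyMeasurable f' (volume.restrict s) :=
  (aestronglyMeasurable_deriv f _).congr <|
    (ae_restrict_iff' hs).2 (ae_of_all _ fun t ht => (hderiv t ht).deriv)

theorem pointwise_sq_bound_of_H1_general
    {H : Type*} [NormedAddCommGroup H] [InnerProductSpace ℝ H]
    (f f' : ℝ → H)
    (hderiv : ∀ t ∈ Set.Icc (0 : ℝ) 1, HasDerivWithinAt f (f' t) (Set.Icc 0 1) t)
    (hf2 : IntegrableOn (fun t => ‖f t‖ ^ 2) (Set.Ioo 0 1))
    (hf'2 : IntegrableOn (fun t => ‖f' t‖ ^ 2) (Set.Ioo 0 1)) :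
    ∀ x ∈ Set.Icc (0 : ℝ) 1,
      ‖f x‖ ^ 2 ≤ (∫ t in Set.Ioo (0 : ℝ) 1, ‖f t‖ ^ 2) +
        2 * Real.sqrt (∫ t in Set.Ioo (0 : ℝ) 1, ‖f t‖ ^ 2) *
          Real.sqrt (∫ t in Set.Ioo (0 : ℝ) 1, ‖f' t‖ ^ 2) := by
  intro x hx
  have hf := memLp_two_norm_of_integrable_sq_norm hf2
  have hf' := memLp_two_norm_of_integrable_sq_norm hf'2
  have hdg : ∀ t ∈ Icc (0 : ℝ) 1,
      HasDerivWithinAt (‖f ·‖ ^ 2) (2 * inner ℝ (f t) (f' t)) (Icc 0 1) t :=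
    fun t ht => (hderiv t ht).norm_sq
  have hle : ∀ t, |2 * inner ℝ (f t) (f' t)| ≤ 2 * (‖f t‖ * ‖f' t‖) := fun t => by
    rw [abs_mul, abs_two]; gcongr; exact abs_real_inner_le_norm _ _
  have hprod : IntegrableOn (fun t => 2 * (‖f t‖ * ‖f' t‖)) (Ioo 0 1) :=
    (hf.integrable_mul hf').const_mul 2
  have hint : IntegrableOn (fun t => 2 * inner ℝ (f t) (f' t)) (Ioo 0 1) :=
    hprod.mono' (aestronglyMeasurable_restrict_of_hasDerivAt measurableSet_Ioo fun t ht =>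
      (hdg t (Ioo_subset_Icc_self ht)).hasDerivAt (Icc_mem_nhds ht.1 ht.2)) (ae_of_all _ hle)
  have hCS : ∫ t in Ioo (0 : ℝ) 1, |2 * inner ℝ (f t) (f' t)| ≤
      2 * (√(∫ t in Ioo (0 : ℝ) 1, ‖f t‖ ^ 2) * √(∫ t in Ioo (0 : ℝ) 1, ‖f' t‖ ^ 2)) := by
    refine (integral_mono hint.abs hprod hle).trans ?_
    rw [integral_const_mul]
    gcongr
    exact integral_mul_le_sqrt_mul_sqrt hf hf'
  have hbound := mul_le_integral_add_mul_integral_abs_deriv zero_le_one hdg hint hx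
  simp only [sub_zero, one_mul] at hbound
  linarith

/-- Pointwise bound for `H`-valued `H¹(0,1)` functions:
`‖f x‖ ^ 2 ≤ ‖f‖₂ ^ 2 + 2 * ‖f‖₂ * ‖f'‖₂` for every `x ∈ [0,1]`. -/
theorem pointwise_sq_bound_of_H1
    {H : Type*} [NormedAddCommGroup H] [InnerProductSpace ℝ H] [CompleteSpace H]
    (f f' : ℝ → H)
    (hcont : ContinuousOn f (Set.Icc 0 1))
    (hderiv : ∀ t ∈ Set.Icc (0 : ℝ) 1, HasDerivWithinAt f (f' t) (Set.Icc 0 1) t)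
    (hf2 : IntegrableOn (fun t => ‖f t‖ ^ 2) (Set.Ioo 0 1))
    (hf'2 : IntegrableOn (fun t => ‖f' t‖ ^ 2) (Set.Ioo 0 1)) :
    ∀ x ∈ Set.Icc (0 : ℝ) 1,
      ‖f x‖ ^ 2 ≤ (∫ t in Set.Ioo (0 : ℝ) 1, ‖f t‖ ^ 2) +
        2 * Real.sqrt (∫ t in Set.Ioo (0 : ℝ) 1, ‖f t‖ ^ 2) *
          Real.sqrt (∫ t in Set.Ioo (0 : ℝ) 1, ‖f' t‖ ^ 2) :=
  pointwise_sq_bound_of_H1_general f f' hderiv hf2 hf'2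
end

section
/- Let H be a real Hilbert space and let f : ℝ → H be continuous on [0,1] and differentiable on [0,1] with derivative f' (derivative taken within [0,1] at the endpoints), and assume that t ↦ ‖f(t)‖_H^2 and t ↦ ‖f'(t)‖_H^2 are integrable on (0,1). Set ‖f‖₂ := (∫₀¹ ‖f(t)‖_H^2 dt)^{1/2}, ‖f'‖₂ := (∫₀¹ ‖f'(t)‖_H^2 dt)^{1/2}, and ‖f‖_{H¹} := (‖f‖₂^2 + ‖f'‖₂^2)^{1/2}. Then for every x ∈ [0,1] one has ‖f(x)‖_H^2 ≤ 4 · ‖f‖_{H¹} · ‖f‖₂; in particular the sup-norm of f on [0,1] satisfies ‖f‖_∞^2 ≤ 4‖f‖_{H¹}‖f‖₂. -/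
open MeasureTheory Set
open scoped RealInnerProductSpace

/-! The derivative `2⟪f, f'⟫` of `‖f‖²` is bounded by `2‖f‖‖f'‖`. At a minimum point `y` of `‖f‖²`
on `[0,1]` we have `‖f y‖² ≤ ‖f‖₂²`; integrating the derivative from `y` to `x` and applying
Cauchy–Schwarz gives `‖f x‖² ≤ ‖f‖₂² + 2‖f‖₂‖f'‖₂ ≤ 4‖f‖_{H¹}‖f‖₂`. -/

section CauchySchwarz

variable {α : Type*} [MeasurableSpace α] {μ : Measure α} {u v : α → ℝ}

lemma memLp_two_of_nonneg_of_integrable_sq (hu : 0 ≤ u) (hu2 : Integrable (fun x => u x ^ 2) μ) :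
    MemLp u 2 μ := by
  -- `u = √(u²)` inherits measurability from the integrable `u²`
  have hmeas : AEMeasurable (fun x => Real.sqrt (u x ^ 2)) μ := hu2.aemeasurable.sqrt
  simp only [Real.sqrt_sq (hu _)] at hmeas
  exact (memLp_two_iff_integrable_sq hmeas.aestronglyMeasurable).2 hu2

lemma integral_mul_le_sqrt_integral_sq_mul_sqrt_integral_sq (hu : 0 ≤ u) (hv : 0 ≤ v)
    (hu2 : Integrable (fun x => u x ^ 2) μ) (hv2 : Integrable (fun x => v x ^ 2) μ) :
    ∫ x, u x * v x ∂μ ≤ Real.sqrt (∫ x, u x ^ 2 ∂μ) * Real.sqrt (∫ x, v x ^ 2 ∂μ) := by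
  have h := integral_mul_le_Lp_mul_Lq_of_nonneg Real.HolderConjugate.two_two
    (ae_of_all _ hu) (ae_of_all _ hv)
    (by simpa using memLp_two_of_nonneg_of_integrable_sq hu hu2)
    (by simpa using memLp_two_of_nonneg_of_integrable_sq hv hv2)
  simpa only [Real.rpow_two, Real.sqrt_eq_rpow] using h

end CauchySchwarz

lemma abs_sub_le_integral_of_hasDerivAt_of_abs_le {g g' φ : ℝ → ℝ} {a b : ℝ} (hab : a ≤ b)
    (hcont : ContinuousOn g (Icc a b)) (hderiv : ∀ x ∈ Ioo a b, HasDerivAt g (g' x) x)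
    (hφint : IntegrableOn φ (Icc a b)) (hφ : ∀ x ∈ Ioo a b, |g' x| ≤ φ x) :
    |g b - g a| ≤ ∫ x in a..b, φ x := by
  refine abs_sub_le_iff.2 ⟨?_, ?_⟩
  · exact intervalIntegral.sub_le_integral_of_hasDeriv_right_of_le hab hcont
      (fun x hx => (hderiv x hx).hasDerivWithinAt) hφint fun x hx => (le_abs_self _).trans (hφ x hx)
  · have h := intervalIntegral.sub_le_integral_of_hasDeriv_right_of_le hab hcont.neg
      (fun x hx => (hderiv x hx).neg.hasDerivWithinAt) hφint
      fun x hx => (neg_le_abs _).trans (hφ x hx)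
    simpa only [Pi.neg_apply, neg_sub_neg] using h

section VectorValued

variable {E : Type*} [NormedAddCommGroup E] {f f' : ℝ → E} {a b : ℝ}

lemma integrableOn_norm_mul_norm_of_integrableOn_sq {s : Set ℝ}
    (hf2 : IntegrableOn (fun t => ‖f t‖ ^ 2) s) (hf'2 : IntegrableOn (fun t => ‖f' t‖ ^ 2) s) :
    IntegrableOn (fun t => ‖f t‖ * ‖f' t‖) s :=
  (memLp_two_of_nonneg_of_integrable_sq (fun _ => norm_nonneg _) hf2).integrable_mul
    (memLp_two_of_nonneg_of_integrable_sq (fun _ => norm_nonneg _) hf'2) (p := 2) (q := 2)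

lemma abs_sq_norm_sub_sq_norm_le_integral [InnerProductSpace ℝ E] (hcont : ContinuousOn f (Icc a b))
    (hderiv : ∀ t ∈ Ioo a b, HasDerivAt f (f' t) t)
    (hint : IntegrableOn (fun t => ‖f t‖ * ‖f' t‖) (Ioo a b)) {x y : ℝ}
    (hx : x ∈ Icc a b) (hy : y ∈ Icc a b) :
    |‖f x‖ ^ 2 - ‖f y‖ ^ 2| ≤ 2 * ∫ t in Ioo a b, ‖f t‖ * ‖f' t‖ := by
  wlog hyx : y ≤ x generalizing x y
  · rw [abs_sub_comm]; exact this hy hx (le_of_not_ge hyx)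
  have hsub : Icc y x ⊆ Icc a b := Icc_subset_Icc hy.1 hx.2
  have hint' : IntegrableOn (fun t => 2 * (‖f t‖ * ‖f' t‖)) (Icc a b) :=
    ((integrableOn_Icc_iff_integrableOn_Ioo).2 hint).const_mul 2
  calc |‖f x‖ ^ 2 - ‖f y‖ ^ 2| ≤ ∫ t in y..x, 2 * (‖f t‖ * ‖f' t‖) := by
        refine abs_sub_le_integral_of_hasDerivAt_of_abs_le hyx ((hcont.mono hsub).norm.pow 2)
          (fun t ht => (hderiv t (Ioo_subset_Ioo hy.1 hx.2 ht)).norm_sq) (hint'.mono_set hsub)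
          fun t _ => ?_
        rw [abs_mul, abs_two]
        exact mul_le_mul_of_nonneg_left (abs_real_inner_le_norm _ _) zero_le_two
    _ = 2 * ∫ t in Ioc y x, ‖f t‖ * ‖f' t‖ := by
        rw [intervalIntegral.integral_of_le hyx, integral_const_mul]
    _ ≤ 2 * ∫ t in Ioo a b, ‖f t‖ * ‖f' t‖ := by
        refine mul_le_mul_of_nonneg_left (setIntegral_mono_set hint
          (ae_of_all _ fun t => by positivity) ?_) zero_le_two
        exact (Ioc_subset_Icc_self.trans hsub).eventuallyLE.trans Ioo_ae_eq_Icc.symm.le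

lemma exists_mem_Icc_mul_sq_norm_le_integral (hab : a < b) (hcont : ContinuousOn f (Icc a b))
    (hf2 : IntegrableOn (fun t => ‖f t‖ ^ 2) (Ioo a b)) :
    ∃ y ∈ Icc a b, (b - a) * ‖f y‖ ^ 2 ≤ ∫ t in Ioo a b, ‖f t‖ ^ 2 := by
  obtain ⟨y, hy, hymin⟩ := isCompact_Icc.exists_isMinOn (nonempty_Icc.2 hab.le) (hcont.norm.pow 2)
  refine ⟨y, hy, ?_⟩
  have h := setIntegral_mono_on (integrableOn_const measure_Ioo_lt_top.ne) hf2 measurableSet_Ioo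
    fun t ht => isMinOn_iff.mp hymin t (Ioo_subset_Icc_self ht)
  simpa [Real.volume_Ioo, hab.le] using h

theorem sq_norm_le_of_hasDerivAt [InnerProductSpace ℝ E] (hab : a < b)
    (hcont : ContinuousOn f (Icc a b))
    (hderiv : ∀ t ∈ Ioo a b, HasDerivAt f (f' t) t)
    (hf2 : IntegrableOn (fun t => ‖f t‖ ^ 2) (Ioo a b))
    (hf'2 : IntegrableOn (fun t => ‖f' t‖ ^ 2) (Ioo a b)) {x : ℝ} (hx : x ∈ Icc a b) :
    ‖f x‖ ^ 2 ≤ (∫ t in Ioo a b, ‖f t‖ ^ 2) / (b - a) +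
      2 * (Real.sqrt (∫ t in Ioo a b, ‖f t‖ ^ 2) * Real.sqrt (∫ t in Ioo a b, ‖f' t‖ ^ 2)) := by
  obtain ⟨y, hy, hyavg⟩ := exists_mem_Icc_mul_sq_norm_le_integral hab hcont hf2
  have hvar := abs_sub_le_iff.1 (abs_sq_norm_sub_sq_norm_le_integral hcont hderiv
    (integrableOn_norm_mul_norm_of_integrableOn_sq hf2 hf'2) hx hy)
  have hCS := integral_mul_le_sqrt_integral_sq_mul_sqrt_integral_sq
    (fun _ => norm_nonneg _) (fun _ => norm_nonneg _) hf2 hf'2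
  have hy' : ‖f y‖ ^ 2 ≤ (∫ t in Ioo a b, ‖f t‖ ^ 2) / (b - a) := by
    rw [le_div_iff₀ (sub_pos.2 hab)]; linarith
  linarith

end VectorValued

lemma add_two_mul_sqrt_mul_sqrt_le {A B : ℝ} (hA : 0 ≤ A) (hB : 0 ≤ B) :
    A + 2 * (Real.sqrt A * Real.sqrt B) ≤ 4 * Real.sqrt (A + B) * Real.sqrt A := by
  have hAB : Real.sqrt A ≤ Real.sqrt (A + B) := Real.sqrt_le_sqrt (by linarith)
  have hBA : Real.sqrt B ≤ Real.sqrt (A + B) := Real.sqrt_le_sqrt (by linarith)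
  have hAA : Real.sqrt A * Real.sqrt A = A := Real.mul_self_sqrt hA
  nlinarith [Real.sqrt_nonneg A, mul_le_mul_of_nonneg_right hAB (Real.sqrt_nonneg A),
    mul_le_mul_of_nonneg_right hBA (Real.sqrt_nonneg A)]

lemma sq_sSup_image_le {α : Type*} {s : Set α} {u : α → ℝ} {C : ℝ} (hC : 0 ≤ C)
    (hu : ∀ x ∈ s, 0 ≤ u x) (h : ∀ x ∈ s, u x ^ 2 ≤ C) : sSup (u '' s) ^ 2 ≤ C := by
  have hsup : sSup (u '' s) ≤ Real.sqrt C := by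
    refine Real.sSup_le ?_ (Real.sqrt_nonneg C)
    rintro _ ⟨x, hx, rfl⟩
    exact Real.le_sqrt_of_sq_le (h x hx)
  have hsup0 : 0 ≤ sSup (u '' s) := Real.sSup_nonneg (by rintro _ ⟨x, hx, rfl⟩; exact hu x hx)
  calc sSup (u '' s) ^ 2 ≤ Real.sqrt C ^ 2 := pow_le_pow_left₀ hsup0 hsup 2
    _ = C := Real.sq_sqrt hC

theorem sup_sq_le_four_H1_mul_L2_general
    {H : Type*} [NormedAddCommGroup H] [InnerProductSpace ℝ H]
    (f f' : ℝ → H)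
    (hcont : ContinuousOn f (Set.Icc 0 1))
    (hderiv : ∀ t ∈ Set.Icc (0 : ℝ) 1, HasDerivWithinAt f (f' t) (Set.Icc 0 1) t)
    (hf2 : IntegrableOn (fun t => ‖f t‖ ^ 2) (Set.Ioo 0 1))
    (hf'2 : IntegrableOn (fun t => ‖f' t‖ ^ 2) (Set.Ioo 0 1)) :
    (∀ x ∈ Set.Icc (0 : ℝ) 1,
      ‖f x‖ ^ 2 ≤ 4 * Real.sqrt ((∫ t in Set.Ioo (0 : ℝ) 1, ‖f t‖ ^ 2) +
          (∫ t in Set.Ioo (0 : ℝ) 1, ‖f' t‖ ^ 2)) *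
        Real.sqrt (∫ t in Set.Ioo (0 : ℝ) 1, ‖f t‖ ^ 2)) ∧
    (sSup ((fun x => ‖f x‖) '' Set.Icc (0 : ℝ) 1)) ^ 2 ≤
      4 * Real.sqrt ((∫ t in Set.Ioo (0 : ℝ) 1, ‖f t‖ ^ 2) +
          (∫ t in Set.Ioo (0 : ℝ) 1, ‖f' t‖ ^ 2)) *
        Real.sqrt (∫ t in Set.Ioo (0 : ℝ) 1, ‖f t‖ ^ 2) := by
  have hderiv' : ∀ t ∈ Ioo (0 : ℝ) 1, HasDerivAt f (f' t) t := fun t ht =>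
    (hderiv t (Ioo_subset_Icc_self ht)).hasDerivAt (Icc_mem_nhds ht.1 ht.2)
  have hA : 0 ≤ ∫ t in Ioo (0 : ℝ) 1, ‖f t‖ ^ 2 :=
    setIntegral_nonneg measurableSet_Ioo fun _ _ => sq_nonneg _
  have hB : 0 ≤ ∫ t in Ioo (0 : ℝ) 1, ‖f' t‖ ^ 2 :=
    setIntegral_nonneg measurableSet_Ioo fun _ _ => sq_nonneg _
  have hpointwise : ∀ x ∈ Icc (0 : ℝ) 1, ‖f x‖ ^ 2 ≤
      4 * Real.sqrt ((∫ t in Ioo (0 : ℝ) 1, ‖f t‖ ^ 2) + (∫ t in Ioo (0 : ℝ) 1, ‖f' t‖ ^ 2)) *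
        Real.sqrt (∫ t in Ioo (0 : ℝ) 1, ‖f t‖ ^ 2) := by
    intro x hx
    have h := sq_norm_le_of_hasDerivAt zero_lt_one hcont hderiv' hf2 hf'2 hx
    rw [sub_zero, div_one] at h
    exact h.trans (add_two_mul_sqrt_mul_sqrt_le hA hB)
  exact ⟨hpointwise, sq_sSup_image_le (by positivity) (fun _ _ => norm_nonneg _) hpointwise⟩

/-- Pointwise bound for `H`-valued `H¹(0,1)` functions:
`‖f x‖ ^ 2 ≤ 4 * ‖f‖_{H¹} * ‖f‖₂` for every `x ∈ [0,1]`; in particular the sup-norm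
satisfies `‖f‖_∞ ^ 2 ≤ 4 * ‖f‖_{H¹} * ‖f‖₂`. -/
theorem sup_sq_le_four_H1_mul_L2
    {H : Type*} [NormedAddCommGroup H] [InnerProductSpace ℝ H] [CompleteSpace H]
    (f f' : ℝ → H)
    (hcont : ContinuousOn f (Set.Icc 0 1))
    (hderiv : ∀ t ∈ Set.Icc (0 : ℝ) 1, HasDerivWithinAt f (f' t) (Set.Icc 0 1) t)
    (hf2 : IntegrableOn (fun t => ‖f t‖ ^ 2) (Set.Ioo 0 1))
    (hf'2 : IntegrableOn (fun t => ‖f' t‖ ^ 2) (Set.Ioo 0 1)) :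
    (∀ x ∈ Set.Icc (0 : ℝ) 1,
      ‖f x‖ ^ 2 ≤ 4 * Real.sqrt ((∫ t in Set.Ioo (0 : ℝ) 1, ‖f t‖ ^ 2) +
          (∫ t in Set.Ioo (0 : ℝ) 1, ‖f' t‖ ^ 2)) *
        Real.sqrt (∫ t in Set.Ioo (0 : ℝ) 1, ‖f t‖ ^ 2)) ∧
    (sSup ((fun x => ‖f x‖) '' Set.Icc (0 : ℝ) 1)) ^ 2 ≤
      4 * Real.sqrt ((∫ t in Set.Ioo (0 : ℝ) 1, ‖f t‖ ^ 2) +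
          (∫ t in Set.Ioo (0 : ℝ) 1, ‖f' t‖ ^ 2)) *
        Real.sqrt (∫ t in Set.Ioo (0 : ℝ) 1, ‖f t‖ ^ 2) :=
  sup_sq_le_four_H1_mul_L2_general f f' hcont hderiv hf2 hf'2
end

section
/- Let H be a real Hilbert space and let f : ℝ → H be continuous on [0,1] and differentiable on [0,1] with derivative f' (derivative taken within [0,1] at the endpoints), and assume that t ↦ ‖f(t)‖_H^2 and t ↦ ‖f'(t)‖_H^2 are integrable on (0,1). Set ‖f‖₂ := (∫₀¹ ‖f(t)‖_H^2 dt)^{1/2} and ‖f'‖₂ := (∫₀¹ ‖f'(t)‖_H^2 dt)^{1/2}. Then the boundary trace of f satisfies ‖f(0)‖_H^2 + ‖f(1)‖_H^2 ≤ 2 · sup_{x ∈ [0,1]} ‖f(x)‖_H^2 ≤ 4 · (‖f‖₂^2 + ‖f'‖₂^2); in particular ‖(f(0), f(1))‖_{H×H} ≤ √2 ‖f‖_∞ ≤ 2 ‖f‖_{H¹}, where ‖f‖_{H¹} := (‖f‖₂² + ‖f'‖₂²)^{1/2}. -/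
/-!
The derivative `2 ⟪f, f'⟫` of `‖f‖ ^ 2` is dominated by `‖f‖ ^ 2 + ‖f'‖ ^ 2`, so two values of
`‖f‖ ^ 2` on `[0, 1]` differ by at most `E = ‖f‖₂ ^ 2 + ‖f'‖₂ ^ 2`. Averaging
`‖f x‖ ^ 2 ≤ ‖f y‖ ^ 2 + E` over `y ∈ [0, 1]` gives `‖f x‖ ^ 2 ≤ ‖f‖₂ ^ 2 + E ≤ 2 E` for every `x`,
which bounds the supremum; the boundary values are bounded by the supremum.
-/

open MeasureTheory Set

section RealValued

variable {g g' φ : ℝ → ℝ} {a b x y : ℝ}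

theorem sub_le_intervalIntegral_of_hasDerivWithinAt_Icc (hxy : x ≤ y)
    (hderiv : ∀ t ∈ Icc x y, HasDerivWithinAt g (g' t) (Icc x y) t)
    (hφ : IntegrableOn φ (Icc x y)) (hle : ∀ t ∈ Ioo x y, g' t ≤ φ t) :
    g y - g x ≤ ∫ t in x..y, φ t :=
  intervalIntegral.sub_le_integral_of_hasDeriv_right_of_le hxy
    (fun t ht => (hderiv t ht).continuousWithinAt)
    (fun t ht => ((hderiv t (Ioo_subset_Icc_self ht)).hasDerivAt
      (Icc_mem_nhds ht.1 ht.2)).hasDerivWithinAt) hφ hle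

theorem abs_sub_le_setIntegral_of_abs_deriv_le
    (hderiv : ∀ t ∈ Icc a b, HasDerivWithinAt g (g' t) (Icc a b) t)
    (hφ : IntegrableOn φ (Ioo a b)) (hbound : ∀ t ∈ Ioo a b, |g' t| ≤ φ t)
    (hx : x ∈ Icc a b) (hy : y ∈ Icc a b) :
    |g y - g x| ≤ ∫ t in Ioo a b, φ t := by
  wlog hxy : x ≤ y generalizing x y
  · rw [abs_sub_comm]; exact this hy hx (le_of_not_ge hxy)
  have hsub : Icc x y ⊆ Icc a b := Icc_subset_Icc hx.1 hy.2
  have hderiv' : ∀ t ∈ Icc x y, HasDerivWithinAt g (g' t) (Icc x y) t :=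
    fun t ht => (hderiv t (hsub ht)).mono hsub
  have hφ' : IntegrableOn φ (Icc x y) :=
    (by rwa [integrableOn_Icc_iff_integrableOn_Ioo] : IntegrableOn φ (Icc a b)).mono_set hsub
  have hbound' : ∀ t ∈ Ioo x y, |g' t| ≤ φ t :=
    fun t ht => hbound t (Ioo_subset_Ioo hx.1 hy.2 ht)
  have hup := sub_le_intervalIntegral_of_hasDerivWithinAt_Icc hxy hderiv' hφ'
    fun t ht => (le_abs_self _).trans (hbound' t ht)
  have hdown : g x - g y ≤ ∫ t in x..y, φ t := by
    simpa only [Pi.neg_apply, neg_sub_neg] using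
      sub_le_intervalIntegral_of_hasDerivWithinAt_Icc (g := -g) hxy
        (fun t ht => (hderiv' t ht).neg) hφ' fun t ht => (neg_le_abs _).trans (hbound' t ht)
  have hmono : ∫ t in x..y, φ t ≤ ∫ t in Ioo a b, φ t := by
    rw [intervalIntegral.integral_of_le hxy, integral_Ioc_eq_integral_Ioo]
    refine setIntegral_mono_set hφ ?_ (Ioo_subset_Ioo hx.1 hy.2).eventuallyLE
    filter_upwards [ae_restrict_mem measurableSet_Ioo] with t ht
    exact (abs_nonneg _).trans (hbound t ht)
  exact abs_sub_le_iff.2 ⟨hup.trans hmono, hdown.trans hmono⟩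

theorem mul_le_setIntegral_add_of_forall_le_add {C : ℝ} (hab : a ≤ b)
    (hg : IntegrableOn g (Ioo a b)) (hle : ∀ y ∈ Ioo a b, g x ≤ g y + C) :
    (b - a) * g x ≤ (∫ y in Ioo a b, g y) + (b - a) * C := by
  have hconst : ∀ c : ℝ, ∫ _ in Ioo a b, c = (b - a) * c := fun c => by
    simp [Real.volume_real_Ioo_of_le hab]
  have hCint : IntegrableOn (fun _ => C) (Ioo a b) := integrableOn_const (by simp)
  calc (b - a) * g x = ∫ _ in Ioo a b, g x := (hconst _).symm
    _ ≤ ∫ y in Ioo a b, (g y + C) :=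
      setIntegral_mono_on (integrableOn_const (by simp)) (hg.add hCint) measurableSet_Ioo hle
    _ = (∫ y in Ioo a b, g y) + (b - a) * C := by rw [integral_add hg hCint, hconst]

end RealValued

section HilbertValued

variable {H : Type*} [NormedAddCommGroup H] [InnerProductSpace ℝ H]

theorem abs_two_mul_inner_le_norm_sq_add_norm_sq (u v : H) :
    |2 * inner ℝ u v| ≤ ‖u‖ ^ 2 + ‖v‖ ^ 2 := by
  rw [abs_mul, abs_two]
  nlinarith [abs_real_inner_le_norm u v, two_mul_le_add_sq ‖u‖ ‖v‖]

theorem mul_norm_sq_le_of_hasDerivWithinAt {f f' : ℝ → H} {a b x : ℝ}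
    (hderiv : ∀ t ∈ Icc a b, HasDerivWithinAt f (f' t) (Icc a b) t)
    (hf2 : IntegrableOn (fun t => ‖f t‖ ^ 2) (Ioo a b))
    (hf'2 : IntegrableOn (fun t => ‖f' t‖ ^ 2) (Ioo a b)) (hx : x ∈ Icc a b) :
    (b - a) * ‖f x‖ ^ 2 ≤ (∫ t in Ioo a b, ‖f t‖ ^ 2) +
      (b - a) * ((∫ t in Ioo a b, ‖f t‖ ^ 2) + ∫ t in Ioo a b, ‖f' t‖ ^ 2) := by
  have hdiff : ∀ y ∈ Icc a b,
      |‖f x‖ ^ 2 - ‖f y‖ ^ 2| ≤ ∫ t in Ioo a b, (‖f t‖ ^ 2 + ‖f' t‖ ^ 2) :=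
    fun y hy => abs_sub_le_setIntegral_of_abs_deriv_le (fun t ht => (hderiv t ht).norm_sq)
      (hf2.add hf'2) (fun t _ => abs_two_mul_inner_le_norm_sq_add_norm_sq _ _) hy hx
  rw [← integral_add hf2 hf'2]
  exact mul_le_setIntegral_add_of_forall_le_add (hx.1.trans hx.2) hf2
    fun y hy => by linarith [(abs_le.1 (hdiff y (Ioo_subset_Icc_self hy))).2]

end HilbertValued

theorem trace_estimate_H1_general
    {H : Type*} [NormedAddCommGroup H] [InnerProductSpace ℝ H]
    (f f' : ℝ → H)
    (hderiv : ∀ t ∈ Set.Icc (0 : ℝ) 1, HasDerivWithinAt f (f' t) (Set.Icc 0 1) t)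
    (hf2 : IntegrableOn (fun t => ‖f t‖ ^ 2) (Set.Ioo 0 1))
    (hf'2 : IntegrableOn (fun t => ‖f' t‖ ^ 2) (Set.Ioo 0 1)) :
    (‖f 0‖ ^ 2 + ‖f 1‖ ^ 2 ≤ 2 * sSup ((fun x => ‖f x‖ ^ 2) '' Set.Icc (0 : ℝ) 1)) ∧
    (2 * sSup ((fun x => ‖f x‖ ^ 2) '' Set.Icc (0 : ℝ) 1) ≤
      4 * ((∫ t in Set.Ioo (0 : ℝ) 1, ‖f t‖ ^ 2) +
        (∫ t in Set.Ioo (0 : ℝ) 1, ‖f' t‖ ^ 2))) ∧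
    (Real.sqrt (‖f 0‖ ^ 2 + ‖f 1‖ ^ 2) ≤
      Real.sqrt 2 * sSup ((fun x => ‖f x‖) '' Set.Icc (0 : ℝ) 1)) ∧
    (Real.sqrt 2 * sSup ((fun x => ‖f x‖) '' Set.Icc (0 : ℝ) 1) ≤
      2 * Real.sqrt ((∫ t in Set.Ioo (0 : ℝ) 1, ‖f t‖ ^ 2) +
        (∫ t in Set.Ioo (0 : ℝ) 1, ‖f' t‖ ^ 2))) := by
  set E := (∫ t in Ioo (0 : ℝ) 1, ‖f t‖ ^ 2) + ∫ t in Ioo (0 : ℝ) 1, ‖f' t‖ ^ 2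
  set S := sSup ((fun x => ‖f x‖) '' Icc (0 : ℝ) 1)
  have hsq : ∀ x ∈ Icc (0 : ℝ) 1, ‖f x‖ ^ 2 ≤ 2 * E := fun x hx => by
    have h := mul_norm_sq_le_of_hasDerivWithinAt hderiv hf2 hf'2 hx
    have : 0 ≤ ∫ t in Ioo (0 : ℝ) 1, ‖f' t‖ ^ 2 :=
      setIntegral_nonneg measurableSet_Ioo fun _ _ => sq_nonneg _
    simp only [sub_zero, one_mul] at h
    linarith
  have hnorm : ∀ x ∈ Icc (0 : ℝ) 1, ‖f x‖ ≤ √(2 * E) :=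
    fun x hx => Real.le_sqrt_of_sq_le (hsq x hx)
  have hbdd_sq : BddAbove ((fun x => ‖f x‖ ^ 2) '' Icc (0 : ℝ) 1) := ⟨_, forall_mem_image.2 hsq⟩
  have hbdd : BddAbove ((fun x => ‖f x‖) '' Icc (0 : ℝ) 1) := ⟨_, forall_mem_image.2 hnorm⟩
  have hne : (Icc (0 : ℝ) 1).Nonempty := nonempty_Icc.2 zero_le_one
  have h0 : (0 : ℝ) ∈ Icc 0 1 := left_mem_Icc.2 zero_le_one
  have h1 : (1 : ℝ) ∈ Icc 0 1 := right_mem_Icc.2 zero_le_one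
  have hf0 : ‖f 0‖ ≤ S := le_csSup hbdd (mem_image_of_mem _ h0)
  have hf1 : ‖f 1‖ ≤ S := le_csSup hbdd (mem_image_of_mem _ h1)
  refine ⟨?_, ?_, ?_, ?_⟩
  · linarith [le_csSup hbdd_sq (mem_image_of_mem _ h0), le_csSup hbdd_sq (mem_image_of_mem _ h1)]
  · linarith [csSup_le (hne.image _) (forall_mem_image.2 hsq)]
  · calc √(‖f 0‖ ^ 2 + ‖f 1‖ ^ 2) ≤ √(2 * S ^ 2) := by
          gcongr; nlinarith [norm_nonneg (f 0), norm_nonneg (f 1)]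
      _ = √2 * S := by rw [Real.sqrt_mul zero_le_two, Real.sqrt_sq ((norm_nonneg _).trans hf0)]
  · calc √2 * S ≤ √2 * √(2 * E) := by
          gcongr; exact csSup_le (hne.image _) (forall_mem_image.2 hnorm)
      _ = 2 * √E := by rw [Real.sqrt_mul zero_le_two, ← mul_assoc, Real.mul_self_sqrt zero_le_two]

/-- Trace estimate for `H`-valued `H¹(0,1)` functions:
`‖f 0‖ ^ 2 + ‖f 1‖ ^ 2 ≤ 2 * ‖f‖_∞ ^ 2 ≤ 4 * (‖f‖₂ ^ 2 + ‖f'‖₂ ^ 2)`; in particular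
`‖(f 0, f 1)‖_{H × H} ≤ √2 * ‖f‖_∞ ≤ 2 * ‖f‖_{H¹}`, where the norm on `H × H` is the
Euclidean one, `‖(a, b)‖ = √(‖a‖ ^ 2 + ‖b‖ ^ 2)`. -/
theorem trace_estimate_H1
    {H : Type*} [NormedAddCommGroup H] [InnerProductSpace ℝ H] [CompleteSpace H]
    (f f' : ℝ → H)
    (hcont : ContinuousOn f (Set.Icc 0 1))
    (hderiv : ∀ t ∈ Set.Icc (0 : ℝ) 1, HasDerivWithinAt f (f' t) (Set.Icc 0 1) t)
    (hf2 : IntegrableOn (fun t => ‖f t‖ ^ 2) (Set.Ioo 0 1))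
    (hf'2 : IntegrableOn (fun t => ‖f' t‖ ^ 2) (Set.Ioo 0 1)) :
    (‖f 0‖ ^ 2 + ‖f 1‖ ^ 2 ≤ 2 * sSup ((fun x => ‖f x‖ ^ 2) '' Set.Icc (0 : ℝ) 1)) ∧
    (2 * sSup ((fun x => ‖f x‖ ^ 2) '' Set.Icc (0 : ℝ) 1) ≤
      4 * ((∫ t in Set.Ioo (0 : ℝ) 1, ‖f t‖ ^ 2) +
        (∫ t in Set.Ioo (0 : ℝ) 1, ‖f' t‖ ^ 2))) ∧
    (Real.sqrt (‖f 0‖ ^ 2 + ‖f 1‖ ^ 2) ≤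
      Real.sqrt 2 * sSup ((fun x => ‖f x‖) '' Set.Icc (0 : ℝ) 1)) ∧
    (Real.sqrt 2 * sSup ((fun x => ‖f x‖) '' Set.Icc (0 : ℝ) 1) ≤
      2 * Real.sqrt ((∫ t in Set.Ioo (0 : ℝ) 1, ‖f t‖ ^ 2) +
        (∫ t in Set.Ioo (0 : ℝ) 1, ‖f' t‖ ^ 2))) :=
  trace_estimate_H1_general f f' hderiv hf2 hf'2
end

section
/- Let X be a real Hilbert space, let C ⊆ X be nonempty, and let P : X → X be the metric projection onto C, characterized by the variational inequality: for every x ∈ X, P(x) ∈ C and ⟪x − P(x), w − P(x)⟫ ≤ 0 for all w ∈ C. Let E : X → ℝ be a convex function which is differentiable with gradient g : X → X (i.e. for every x ∈ X, E has gradient g(x) at x, meaning the Fréchet derivative of E at x is the functional ⟪g(x), ·⟫). Then the following are equivalent: (i) E(P(y)) ≤ E(y) for all y ∈ X; (ii) ⟪g(P(y)), y − P(y)⟫ ≥ 0 for all y ∈ X. -/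
/-!
The projection maps the whole ray from `P y` through `y` back to `P y`. Hence if `E ∘ P ≤ E`,
then `E` restricted to the segment `[P y, y]` is minimal at `P y`, and the first-order
condition at a minimum gives `0 ≤ ⟪g (P y), y - P y⟫`. Conversely, convexity gives the
supporting-hyperplane inequality `E (P y) + ⟪g (P y), y - P y⟫ ≤ E y`.
-/

open Set AffineMap

theorem ConvexOn.apply_sub_le_sub_of_hasFDerivAt {E : Type*} [NormedAddCommGroup E]
    [NormedSpace ℝ E] {s : Set E} {f : E → ℝ} {f' : E →L[ℝ] ℝ} {x y : E}
    (hf : ConvexOn ℝ s f) (hx : x ∈ s) (hy : y ∈ s) (hfx : HasFDerivAt f f' x) :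
    f' (y - x) ≤ f y - f x := by
  have hline : ConvexOn ℝ (lineMap x y ⁻¹' s) (f ∘ lineMap x y) :=
    hf.comp_affineMap (lineMap x y : ℝ →ᵃ[ℝ] E)
  have hderiv : HasDerivAt (f ∘ lineMap (k := ℝ) x y) (f' (y - x)) 0 :=
    (lineMap_apply_zero x y (k := ℝ) ▸ hfx).comp_hasDerivAt (0 : ℝ) hasDerivAt_lineMap
  simpa [slope_def_field] using
    hline.le_slope_of_hasDerivAt (by simpa using hx) (by simpa using hy) one_pos hderiv

section Projection

variable {X : Type*} [NormedAddCommGroup X] [InnerProductSpace ℝ X] {C : Set X} {P : X → X}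

theorem proj_add_smul_sub_proj (hPmem : ∀ x, P x ∈ C)
    (hPvar : ∀ x, ∀ w ∈ C, inner ℝ (x - P x) (w - P x) ≤ 0) (y : X) {t : ℝ} (ht : 0 ≤ t) :
    P (P y + t • (y - P y)) = P y := by
  set a := P y
  set z := a + t • (y - a)
  set p := P z
  have hz : inner ℝ (z - p) (a - p) ≤ 0 := hPvar z a (hPmem y)
  have hray : inner ℝ (z - a) (p - a) ≤ 0 := by
    have hzy : z - a = t • (y - a) := add_sub_cancel_left a _
    rw [hzy, real_inner_smul_left]
    exact mul_nonpos_of_nonneg_of_nonpos ht (hPvar y p (hPmem z))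
  have hdist : inner ℝ (a - p) (a - p) = inner ℝ (z - p) (a - p) + inner ℝ (z - a) (p - a) := by
    simp only [inner_sub_left, inner_sub_right, real_inner_comm]
    ring
  have hap : a - p = 0 := real_inner_self_nonpos.mp (by linarith [hz, hray])
  exact (sub_eq_zero.mp hap).symm

theorem isMinOn_segment_proj_of_comp_proj_le (hPmem : ∀ x, P x ∈ C)
    (hPvar : ∀ x, ∀ w ∈ C, inner ℝ (x - P x) (w - P x) ≤ 0) {E : X → ℝ}
    (hdec : ∀ y, E (P y) ≤ E y) (y : X) : IsMinOn E (segment ℝ (P y) y) (P y) := by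
  rw [segment_eq_image']
  rintro _ ⟨t, ht, rfl⟩
  simpa [proj_add_smul_sub_proj hPmem hPvar y ht.1] using hdec (P y + t • (y - P y))

end Projection

theorem projection_energy_decrease_iff_gradient_condition_general
    {X : Type*} [NormedAddCommGroup X] [InnerProductSpace ℝ X] [CompleteSpace X]
    (C : Set X) (P : X → X)
    (hPmem : ∀ x : X, P x ∈ C)
    (hPvar : ∀ x : X, ∀ w ∈ C, (inner ℝ (x - P x) (w - P x) : ℝ) ≤ 0)
    (E : X → ℝ) (g : X → X)
    (hconv : ConvexOn ℝ Set.univ E)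
    (hgrad : ∀ x : X, HasGradientAt E (g x) x) :
    (∀ y : X, E (P y) ≤ E y) ↔ (∀ y : X, 0 ≤ (inner ℝ (g (P y)) (y - P y) : ℝ)) := by
  constructor
  · intro hdec y
    simpa using (isMinOn_segment_proj_of_comp_proj_le hPmem hPvar hdec y).localize.hasFDerivWithinAt_nonneg
      (hgrad (P y)).hasFDerivAt.hasFDerivWithinAt
      (sub_mem_posTangentConeAt_of_segment_subset subset_rfl)
  · intro hg y
    have hsupport := hconv.apply_sub_le_sub_of_hasFDerivAt (mem_univ (P y)) (mem_univ y)
      (hgrad (P y)).hasFDerivAt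
    simp only [InnerProductSpace.toDual_apply_apply] at hsupport
    linarith [hg y]

/-- For the metric projection `P` onto a nonempty set `C` in a real Hilbert space
(characterized by the variational inequality) and a convex differentiable function
`E` with gradient `g`, the invariance condition `E (P y) ≤ E y` for all `y` is
equivalent to the gradient condition `⟪g (P y), y - P y⟫ ≥ 0` for all `y`. -/
theorem projection_energy_decrease_iff_gradient_condition
    {X : Type*} [NormedAddCommGroup X] [InnerProductSpace ℝ X] [CompleteSpace X]
    (C : Set X) (hC : C.Nonempty) (P : X → X)
    (hPmem : ∀ x : X, P x ∈ C)
    (hPvar : ∀ x : X, ∀ w ∈ C, (inner ℝ (x - P x) (w - P x) : ℝ) ≤ 0)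
    (E : X → ℝ) (g : X → X)
    (hconv : ConvexOn ℝ Set.univ E)
    (hgrad : ∀ x : X, HasGradientAt E (g x) x) :
    (∀ y : X, E (P y) ≤ E y) ↔ (∀ y : X, 0 ≤ (inner ℝ (g (P y)) (y - P y) : ℝ)) :=
  projection_energy_decrease_iff_gradient_condition_general C P hPmem hPvar E g hconv hgrad
end

section
/- Let V be a reflexive real Banach space, X a real normed vector space, and j : V → X an injective continuous linear map (a continuous embedding of V into X). Let T > 0, let u : ℝ → X be continuous on [0,T], and let K ≥ 0. Suppose there is a Lebesgue-null set N ⊆ [0,T] such that for every t ∈ [0,T] \ N there exists v ∈ V with j(v) = u(t) and ‖v‖_V ≤ K. Then for every t ∈ [0,T] there exists v ∈ V with j(v) = u(t) and ‖v‖_V ≤ K; that is, the bound ‖u(t)‖_V ≤ K, valid almost everywhere, holds everywhere on [0,T]. -/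
/-!
By reflexivity and Banach–Alaoglu, closed balls of `V` are weakly compact, so their images under
`j` are weakly compact, hence weakly closed and a fortiori norm-closed in `X`. The complement of
a null set is dense in `[0, T]`, and `u` is continuous, so `u` maps all of `[0, T]` into the
closed set `j '' closedBall 0 K`.
-/

open MeasureTheory Set

lemma Icc_subset_closure_Icc_diff_of_measure_zero {α : Type*} [TopologicalSpace α]
    [LinearOrder α] [OrderTopology α] [DenselyOrdered α] [MeasurableSpace α] {μ : Measure α}
    [μ.IsOpenPosMeasure] {a b : α} (hab : a < b) {N : Set α} (hN : μ N = 0) :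
    Icc a b ⊆ closure (Icc a b \ N) := by
  have hdense : Dense Nᶜ :=
    interior_eq_empty_iff_dense_compl.mp (Measure.interior_eq_empty_of_null hN)
  calc Icc a b = closure (Ioo a b) := (closure_Ioo hab.ne).symm
    _ ⊆ closure (closure (Ioo a b ∩ Nᶜ)) :=
      closure_mono (hdense.open_subset_closure_inter isOpen_Ioo)
    _ ⊆ closure (Icc a b \ N) := by
      rw [closure_closure]
      exact closure_mono (inter_subset_inter_left _ Ioo_subset_Icc_self)

namespace NormedSpace

variable {V : Type*} [NormedAddCommGroup V] [NormedSpace ℝ V]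

lemma isCompact_toWeakSpace_closedBall_of_surjective_inclusionInDoubleDual
    (hrefl : Function.Surjective (inclusionInDoubleDual ℝ V)) (x : V) (r : ℝ) :
    IsCompact (toWeakSpace ℝ V '' Metric.closedBall x r : Set (WeakSpace ℝ V)) := by
  rw [← (Metric.isClosed_closedBall (x := x) (ε := r)).closure_eq,
    (convex_closedBall x r).toWeakSpace_closure ℝ]
  refine isCompact_closure_of_isBounded ℝ V _ ?_ ?_
  · rw [preimage_image_eq _ (toWeakSpace ℝ V).injective]
    exact Metric.isBounded_closedBall
  · rintro φ -
    obtain ⟨v, hv⟩ := hrefl (WeakDual.toStrongDual φ)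
    exact ⟨toWeakSpace ℝ V v, DFunLike.ext _ _ (DFunLike.congr_fun hv)⟩

lemma isClosed_image_closedBall_of_surjective_inclusionInDoubleDual {X : Type*}
    [NormedAddCommGroup X] [NormedSpace ℝ X]
    (hrefl : Function.Surjective (inclusionInDoubleDual ℝ V)) (j : V →L[ℝ] X)
    (x : V) (r : ℝ) : IsClosed (j '' Metric.closedBall x r) := by
  have hweak : toWeakSpace ℝ X '' (j '' Metric.closedBall x r) =
      WeakSpace.map j '' (toWeakSpace ℝ V '' Metric.closedBall x r) := by
    simp only [image_image]
    rfl
  have hcompact : IsCompact (toWeakSpace ℝ X '' (j '' Metric.closedBall x r)) := hweak ▸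
    (isCompact_toWeakSpace_closedBall_of_surjective_inclusionInDoubleDual hrefl x r).image
      (WeakSpace.map j).continuous
  convert hcompact.isClosed.preimage (toWeakSpaceCLM ℝ X).continuous
  exact (preimage_image_eq _ (toWeakSpace ℝ X).injective).symm

end NormedSpace

theorem ae_bound_everywhere_of_reflexive_general
    {V X : Type*} [NormedAddCommGroup V] [NormedSpace ℝ V]
    [NormedAddCommGroup X] [NormedSpace ℝ X]
    (hrefl : Function.Surjective (NormedSpace.inclusionInDoubleDual ℝ V))
    (j : V →L[ℝ] X)
    (T : ℝ) (hT : 0 < T) (u : ℝ → X) (hu : ContinuousOn u (Set.Icc 0 T))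
    (K : ℝ)
    (N : Set ℝ) (hNnull : volume N = 0)
    (hae : ∀ t ∈ Set.Icc 0 T \ N, ∃ v : V, j v = u t ∧ ‖v‖ ≤ K) :
    ∀ t ∈ Set.Icc 0 T, ∃ v : V, j v = u t ∧ ‖v‖ ≤ K := by
  have hclosed :=
    NormedSpace.isClosed_image_closedBall_of_surjective_inclusionInDoubleDual hrefl j 0 K
  have hmaps : MapsTo u (Icc 0 T \ N) (j '' Metric.closedBall 0 K) := fun t ht => by
    obtain ⟨v, hv, hvK⟩ := hae t ht
    exact ⟨v, mem_closedBall_zero_iff.mpr hvK, hv⟩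
  intro t ht
  obtain ⟨v, hvK, hv⟩ := hclosed.closure_eq ▸ hmaps.closure_of_continuousOn
    (hu.mono (closure_minimal sdiff_subset isClosed_Icc))
    (Icc_subset_closure_Icc_diff_of_measure_zero hT hNnull ht)
  exact ⟨v, hv, mem_closedBall_zero_iff.mp hvK⟩

/-- Let `V` be a reflexive real Banach space (reflexivity being expressed by the
surjectivity of the canonical inclusion of `V` into its double dual), `X` a real normed
space, and `j : V → X` an injective continuous linear map (a continuous embedding).
If `u : ℝ → X` is continuous on `[0, T]` and, outside a Lebesgue-null set `N ⊆ [0, T]`,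
`u t` lies in (the image of) `V` with `V`-norm at most `K`, then this holds for
*every* `t ∈ [0, T]`. -/
theorem ae_bound_everywhere_of_reflexive
    {V X : Type*} [NormedAddCommGroup V] [NormedSpace ℝ V] [CompleteSpace V]
    [NormedAddCommGroup X] [NormedSpace ℝ X]
    (hrefl : Function.Surjective (NormedSpace.inclusionInDoubleDual ℝ V))
    (j : V →L[ℝ] X) (hj : Function.Injective j)
    (T : ℝ) (hT : 0 < T) (u : ℝ → X) (hu : ContinuousOn u (Set.Icc 0 T))
    (K : ℝ) (hK : 0 ≤ K)
    (N : Set ℝ) (hN : N ⊆ Set.Icc 0 T) (hNnull : volume N = 0)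
    (hae : ∀ t ∈ Set.Icc 0 T \ N, ∃ v : V, j v = u t ∧ ‖v‖ ≤ K) :
    ∀ t ∈ Set.Icc 0 T, ∃ v : V, j v = u t ∧ ‖v‖ ≤ K :=
  ae_bound_everywhere_of_reflexive_general hrefl j T hT u hu K N hNnull hae
end
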